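/- Let ψ be an admissible weight function and k a natural number. A distribution f on ℝ₊ belongs to H^{−k,ψ(x)}(ℝ₊) (i.e. admits a representation f = Σ_{j=0}^k f_j^{(j)} with f_j ψ^{1/2} ∈ L²(ℝ₊) for all j) if and only if the distribution f ψ^{1/2} belongs to H^{−k}(ℝ₊); moreover the corresponding norms are equivalent: there exists a constant c, depending on k and on the properties of ψ, such that c^{−1} ‖f ψ^{1/2}‖_{H^{−k}(ℝ₊)} ≤ ‖f‖_{H^{−k,ψ(x)}(ℝ₊)} ≤ c ‖f ψ^{1/2}‖_{H^{−k}(ℝ₊)}. -/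

import Mathlib

open MeasureTheory Set
open scoped ENNReal

noncomputable section

/-- An admissible weight function: infinitely smooth and positive on `[0,+∞)`,
every derivative is dominated by the function itself, and the function satisfies
the one-sided comparison condition on unit intervals. -/
def IsAdmissibleWeight (ψ : ℝ → ℝ) : Prop :=
  ContDiffOn ℝ (⊤ : ℕ∞) ψ (Ici 0) ∧ (∀ x : ℝ, 0 ≤ x → 0 < ψ x) ∧
  (∀ j : ℕ, ∃ c : ℝ, ∀ x : ℝ, 0 ≤ x → |iteratedDerivWithin j ψ (Ici 0) x| ≤ c * ψ x) ∧
  (∃ c : ℝ, 0 < c ∧ ∀ x₁ x₂ : ℝ, 0 ≤ x₁ → x₁ < x₂ → x₂ < x₁ + 1 → ψ x₁ ≤ c * ψ x₂)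

/-- `v` is the `n`-th weak (distributional) derivative of `u` on the open set `Ω ⊆ ℝ`. -/
def IsWeakDeriv1 (Ω : Set ℝ) (n : ℕ) (u v : ℝ → ℝ) : Prop :=
  ∀ ϑ : ℝ → ℝ, ContDiff ℝ (⊤ : ℕ∞) ϑ → HasCompactSupport ϑ → tsupport ϑ ⊆ Ω →
    ∫ x in Ω, u x * iteratedDeriv n ϑ x = (-1 : ℝ) ^ n * ∫ x in Ω, v x * ϑ x

/-- The `k`-th distributional derivative of `f` on `Ω` equals `Σ_{j=0}^m g_j^{(j)}`
(a representation in `H^{-m}(Ω)`). -/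
def HasNegRep (Ω : Set ℝ) (k m : ℕ) (f : ℝ → ℝ) (g : ℕ → ℝ → ℝ) : Prop :=
  ∀ ϑ : ℝ → ℝ, ContDiff ℝ (⊤ : ℕ∞) ϑ → HasCompactSupport ϑ → tsupport ϑ ⊆ Ω →
    (-1 : ℝ) ^ k * ∫ x in Ω, f x * iteratedDeriv k ϑ x =
      ∑ j ∈ Finset.range (m + 1), (-1 : ℝ) ^ j * ∫ x in Ω, g j x * iteratedDeriv j ϑ x


/-- The action of the distribution `Σ_{j=0}^k ∂^j F_j` on a test function `ϑ` on `ℝ₊`. -/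
def negPair (k : ℕ) (F : ℕ → ℝ → ℝ) (ϑ : ℝ → ℝ) : ℝ :=
  ∑ j ∈ Finset.range (k + 1), (-1 : ℝ) ^ j * ∫ x in Ioi (0 : ℝ), F j x * iteratedDeriv j ϑ x

/-!
By the Leibniz rule, multiplying `Σⱼ ∂ʲ Fⱼ` by a smooth `w` gives `Σᵢ ∂ⁱ Gᵢ` with
`Gᵢ = Σ_{r ≤ k - i} (-1)ʳ C(i + r, i) F_{i+r} w⁽ʳ⁾`, so weighted `L²` bounds pass from the `Fⱼ` to
the `Gᵢ` as soon as `|w⁽ʳ⁾| b ≤ C a` for the weights `a` (of `F`) and `b` (of `G`). We use this with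
`w = ψ^{1/2}` and with `w = ψ^{-1/2}`. For any real power, `|(ψᵖ)⁽ⁿ⁾| ≤ C ψᵖ` follows by induction
on `n` from `(ψᵖ)' = p ψ' ψ^{p-1}`, the Leibniz rule and `|ψ⁽ʲ⁾| ≤ c ψ`.
-/

open Asymptotics Filter

theorem sum_range_sum_range_succ_comm {M : Type*} [AddCommMonoid M] (k : ℕ) (t : ℕ → ℕ → M) :
    ∑ j ∈ Finset.range (k + 1), ∑ i ∈ Finset.range (j + 1), t i j =
      ∑ i ∈ Finset.range (k + 1), ∑ r ∈ Finset.range (k + 1 - i), t i (i + r) := by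
  simp only [Finset.range_eq_Ico]
  rw [← Finset.sum_Ico_Ico_comm]
  refine Finset.sum_congr rfl fun i _ => ?_
  rw [Finset.sum_Ico_eq_sum_range, Finset.range_eq_Ico]

theorem tsupport_iteratedDeriv_subset {𝕜 F : Type*} [NontriviallyNormedField 𝕜]
    [NormedAddCommGroup F] [NormedSpace 𝕜 F] (f : 𝕜 → F) (n : ℕ) :
    tsupport (iteratedDeriv n f) ⊆ tsupport f := by
  induction n with
  | zero => simp
  | succ n ih => exact iteratedDeriv_succ (f := f) ▸ tsupport_deriv_subset.trans ih

theorem ContDiffOn.continuousOn_iteratedDeriv_of_isOpen {𝕜 F : Type*} [NontriviallyNormedField 𝕜]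
    [NormedAddCommGroup F] [NormedSpace 𝕜 F] {f : 𝕜 → F} {U : Set 𝕜} {n m : ℕ}
    (hf : ContDiffOn 𝕜 n f U) (hU : IsOpen U) (hm : m ≤ n) :
    ContinuousOn (iteratedDeriv m f) U :=
  (hf.continuousOn_iteratedDerivWithin (by exact_mod_cast hm) hU.uniqueDiffOn).congr
    (iteratedDerivWithin_of_isOpen hU).symm

theorem ContDiffOn.contDiff_mul_of_tsupport_subset {U : Set ℝ} {w ϑ : ℝ → ℝ} {n : ℕ}
    (hw : ContDiffOn ℝ n w U) (hU : IsOpen U) (hϑ : ContDiff ℝ n ϑ) (hs : tsupport ϑ ⊆ U) :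
    ContDiff ℝ n fun x => w x * ϑ x := by
  refine contDiff_iff_contDiffAt.2 fun x => ?_
  by_cases hx : x ∈ U
  · exact (hw.contDiffAt (hU.mem_nhds hx)).mul hϑ.contDiffAt
  · refine (contDiffAt_const (c := (0 : ℝ))).congr_of_eventuallyEq ?_
    filter_upwards [notMem_tsupport_iff_eventuallyEq.1 fun h => hx (hs h)] with y hy
    simp [hy]

theorem isBigO_iteratedDeriv_mul {U : Set ℝ} {f g α β : ℝ → ℝ} {n : ℕ} (hU : IsOpen U)
    (hf : ContDiffOn ℝ n f U) (hg : ContDiffOn ℝ n g U)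
    (hfα : ∀ i ≤ n, iteratedDeriv i f =O[𝓟 U] α) (hgβ : ∀ i ≤ n, iteratedDeriv i g =O[𝓟 U] β) :
    iteratedDeriv n (fun x => f x * g x) =O[𝓟 U] fun x => α x * β x := by
  have hLeibniz : EqOn (fun x => ∑ i ∈ Finset.range (n + 1),
      n.choose i * iteratedDeriv i f x * iteratedDeriv (n - i) g x)
      (iteratedDeriv n fun x => f x * g x) U := fun x hx =>
    (iteratedDeriv_fun_mul (hf.contDiffAt (hU.mem_nhds hx)) (hg.contDiffAt (hU.mem_nhds hx))).symm
  refine IsBigO.congr' (IsBigO.fun_sum fun i hi => ?_) (eventuallyEq_principal.2 hLeibniz)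
    EventuallyEq.rfl
  have hi : i ≤ n := Nat.lt_succ_iff.1 (Finset.mem_range.1 hi)
  exact ((hfα i hi).const_mul_left _).mul (hgβ (n - i) (Nat.sub_le n i))

theorem isBigO_iteratedDeriv_rpow {U : Set ℝ} {ρ : ℝ → ℝ} (hU : IsOpen U)
    (hρ : ContDiffOn ℝ (⊤ : ℕ∞) ρ U) (hpos : ∀ x ∈ U, 0 < ρ x)
    (hρρ : ∀ j, iteratedDeriv j ρ =O[𝓟 U] ρ) (n : ℕ) (p : ℝ) :
    iteratedDeriv n (fun x => ρ x ^ p) =O[𝓟 U] fun x => ρ x ^ p := by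
  induction n using Nat.strong_induction_on generalizing p with
  | _ n ih =>
  cases n with
  | zero => simpa using isBigO_refl _ _
  | succ n =>
    have hderiv : EqOn (deriv fun x => ρ x ^ p) (fun x => p * deriv ρ x * ρ x ^ (p - 1)) U :=
      fun x hx => by
        rw [(((hρ.differentiableOn (by simp)).differentiableAt
          (hU.mem_nhds hx)).hasDerivAt.rpow_const (Or.inl (hpos x hx).ne')).deriv]
        ring
    have hprod : EqOn (fun x => ρ x * ρ x ^ (p - 1)) (fun x => ρ x ^ p) U := fun x hx => by
      simp only [Real.rpow_sub_one (hpos x hx).ne', mul_div_cancel₀ _ (hpos x hx).ne']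
    have hρ' : ContDiffOn ℝ n (fun x => p * deriv ρ x) U :=
      contDiffOn_const.mul (hρ.deriv_of_isOpen hU (by exact_mod_cast le_top))
    have hρp : ContDiffOn ℝ n (fun x => ρ x ^ (p - 1)) U :=
      (hρ.of_le (by exact_mod_cast le_top)).rpow_const_of_ne fun x hx => (hpos x hx).ne'
    rw [iteratedDeriv_succ']
    refine IsBigO.congr' (isBigO_iteratedDeriv_mul hU hρ' hρp (fun i _ => ?_)
      fun i hi => ih i (by omega) _) (eventuallyEq_principal.2
      (hderiv.iteratedDeriv_of_isOpen hU n).symm) (eventuallyEq_principal.2 hprod)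
    have hshift : iteratedDeriv i (fun x => p * deriv ρ x) =
        fun x => p * iteratedDeriv (i + 1) ρ x := by
      ext x
      rw [iteratedDeriv_const_mul_field, iteratedDeriv_succ']
    rw [hshift]
    exact (hρρ (i + 1)).const_mul_left p

theorem exists_pos_forall_abs_le_of_isBigO {ι α : Type*} {s : Finset ι} {U : Set α}
    {f : ι → α → ℝ} {g : α → ℝ} (h : ∀ i ∈ s, f i =O[𝓟 U] g) :
    ∃ C, 0 < C ∧ ∀ i ∈ s, ∀ x ∈ U, |f i x| ≤ C * |g x| := by
  obtain ⟨C, hC, hCg⟩ := (IsBigO.fun_sum fun i hi => (h i hi).norm_left).exists_pos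
  refine ⟨C, hC, fun i hi x hx => ?_⟩
  calc |f i x| = ‖f i x‖ := (Real.norm_eq_abs _).symm
    _ ≤ ∑ i ∈ s, ‖f i x‖ :=
      Finset.single_le_sum (f := fun i => ‖f i x‖) (fun i _ => norm_nonneg _) hi
    _ ≤ ‖∑ i ∈ s, ‖f i x‖‖ := Real.le_norm_self _
    _ ≤ C * |g x| := isBigOWith_principal.1 hCg x hx

theorem MeasureTheory.LocallyIntegrableOn.integrableOn_mul_of_zero_off_compact {X : Type*}
    [TopologicalSpace X] [MeasurableSpace X] [OpensMeasurableSpace X] [T2Space X] [SecondCountableTopology X]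
    {μ : Measure X} {U K : Set X} {f h : X → ℝ} (hU : MeasurableSet U)
    (hf : LocallyIntegrableOn f U μ) (hh : ContinuousOn h U) (hK : IsCompact K) (hKU : K ⊆ U)
    (hzero : ∀ x ∉ K, h x = 0) : IntegrableOn (fun x => f x * h x) U μ :=
  ((hf.integrableOn_compact_subset hKU hK).mul_continuousOn (hh.mono hKU) hK
    ).of_forall_sdiff_eq_zero hU fun x hx => by simp [hzero x hx.2]

theorem locallyIntegrableOn_of_memLp_mul {X : Type*} [TopologicalSpace X] [MeasurableSpace X]
    [OpensMeasurableSpace X] [LocallyCompactSpace X] [T2Space X] [SecondCountableTopology X]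
    {μ : Measure X} [IsLocallyFiniteMeasure μ] {U : Set X} {f a : X → ℝ} {p : ℝ≥0∞} (hp : 1 ≤ p)
    (hU : IsOpen U) (ha : ContinuousOn a U) (ha0 : ∀ x ∈ U, a x ≠ 0)
    (hfa : MemLp (fun x => f x * a x) p (μ.restrict U)) : LocallyIntegrableOn f U μ := by
  refine ((locallyIntegrableOn_of_locallyIntegrable_restrict (hfa.locallyIntegrable hp)
    ).mul_continuousOn (ha.inv₀ ha0) hU.isLocallyClosed).congr ?_
  filter_upwards [ae_restrict_mem hU.measurableSet] with x hx
  exact mul_inv_cancel_right₀ (ha0 x hx) (f x)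

theorem sqrt_sum_integral_sq_le_of_abs_le {α : Type*} [MeasurableSpace α] {μ : Measure α}
    {k : ℕ} {f g : ℕ → α → ℝ} {C : ℝ} (hC : 0 ≤ C) (hf : ∀ j ≤ k, MemLp (f j) 2 μ)
    (hgf : ∀ i ≤ k, ∀ᵐ x ∂μ, |g i x| ≤ C * ∑ j ∈ Finset.range (k + 1), |f j x|) :
    √(∑ i ∈ Finset.range (k + 1), ∫ x, g i x ^ 2 ∂μ) ≤
      (k + 1) * C * √(∑ j ∈ Finset.range (k + 1), ∫ x, f j x ^ 2 ∂μ) := by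
  set T := ∑ j ∈ Finset.range (k + 1), ∫ x, f j x ^ 2 ∂μ
  have hfsq : ∀ j ∈ Finset.range (k + 1), Integrable (fun x => f j x ^ 2) μ :=
    fun j hj => (hf j (Nat.lt_succ_iff.1 (Finset.mem_range.1 hj))).integrable_sq
  have hpt : ∀ i ≤ k, ∀ᵐ x ∂μ,
      g i x ^ 2 ≤ (k + 1) * C ^ 2 * ∑ j ∈ Finset.range (k + 1), f j x ^ 2 := by
    intro i hi
    filter_upwards [hgf i hi] with x hx
    have hcs := sq_sum_le_card_mul_sum_sq (s := Finset.range (k + 1)) (f := fun j => |f j x|)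
    simp only [Finset.card_range, sq_abs] at hcs
    calc g i x ^ 2 = |g i x| ^ 2 := (sq_abs _).symm
      _ ≤ (C * ∑ j ∈ Finset.range (k + 1), |f j x|) ^ 2 := pow_le_pow_left₀ (abs_nonneg _) hx 2
      _ ≤ C ^ 2 * ((k + 1 : ℕ) * ∑ j ∈ Finset.range (k + 1), f j x ^ 2) := by
        rw [mul_pow]; gcongr
      _ = _ := by push_cast; ring
  have hint : ∀ i ≤ k, ∫ x, g i x ^ 2 ∂μ ≤ (k + 1) * C ^ 2 * T := fun i hi =>
    calc ∫ x, g i x ^ 2 ∂μ ≤ ∫ x, (k + 1) * C ^ 2 * ∑ j ∈ Finset.range (k + 1), f j x ^ 2 ∂μ :=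
          integral_mono_of_nonneg (ae_of_all _ fun x => sq_nonneg _)
            ((integrable_finsetSum _ hfsq).const_mul _) (hpt i hi)
      _ = (k + 1) * C ^ 2 * T := by rw [integral_const_mul, integral_finsetSum _ hfsq]
  have hsum : ∑ i ∈ Finset.range (k + 1), ∫ x, g i x ^ 2 ∂μ ≤ ((k + 1) * C) ^ 2 * T :=
    calc ∑ i ∈ Finset.range (k + 1), ∫ x, g i x ^ 2 ∂μ
        ≤ ∑ _i ∈ Finset.range (k + 1), (k + 1) * C ^ 2 * T :=
          Finset.sum_le_sum fun i hi => hint i (Nat.lt_succ_iff.1 (Finset.mem_range.1 hi))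
      _ = ((k + 1) * C) ^ 2 * T := by
          rw [Finset.sum_const, Finset.card_range, nsmul_eq_mul]
          push_cast
          ring
  calc _ ≤ √(((k + 1) * C) ^ 2 * T) := Real.sqrt_le_sqrt hsum
    _ = (k + 1) * C * √T := by rw [Real.sqrt_mul (sq_nonneg _), Real.sqrt_sq (by positivity)]

/-- `∑ᵢ ∂ⁱ (leibnizTransfer k w F i)` is the product of `w` with `∑ⱼ ∂ʲ Fⱼ`: the Leibniz rule
moves the derivatives in `⟨Fⱼ, ∂ʲ (w ϑ)⟩` onto `ϑ`. -/
def leibnizTransfer (k : ℕ) (w : ℝ → ℝ) (F : ℕ → ℝ → ℝ) (i : ℕ) (x : ℝ) : ℝ :=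
  ∑ r ∈ Finset.range (k + 1 - i),
    (-1) ^ r * ((i + r).choose i : ℝ) * (F (i + r) x * iteratedDeriv r w x)

theorem negPair_congr (k : ℕ) (F : ℕ → ℝ → ℝ) {ζ ϑ : ℝ → ℝ} (h : EqOn ζ ϑ (Ioi 0)) :
    negPair k F ζ = negPair k F ϑ :=
  Finset.sum_congr rfl fun j _ => congrArg _ <| setIntegral_congr_fun measurableSet_Ioi
    fun x hx => by rw [h.iteratedDeriv_of_isOpen isOpen_Ioi j hx]

theorem integrableOn_mul_iteratedDeriv_mul {k r i : ℕ} {U : Set ℝ} {f w ϑ : ℝ → ℝ}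
    (hU : IsOpen U) (hf : LocallyIntegrableOn f U) (hw : ContDiffOn ℝ k w U)
    (hϑ : ContDiff ℝ k ϑ) (hϑc : HasCompactSupport ϑ) (hϑs : tsupport ϑ ⊆ U)
    (hr : r ≤ k) (hi : i ≤ k) :
    IntegrableOn (fun x => f x * (iteratedDeriv r w x * iteratedDeriv i ϑ x)) U :=
  hf.integrableOn_mul_of_zero_off_compact hU.measurableSet
    ((hw.continuousOn_iteratedDeriv_of_isOpen hU hr).mul
      (hϑ.continuous_iteratedDeriv i (by exact_mod_cast hi)).continuousOn) hϑc hϑs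
    fun x hx => by
      simp [image_eq_zero_of_notMem_tsupport fun h => hx (tsupport_iteratedDeriv_subset ϑ i h)]

theorem integral_leibnizTransfer_mul {k i : ℕ} {U : Set ℝ} {w ϑ : ℝ → ℝ} {F : ℕ → ℝ → ℝ}
    (hint : ∀ r < k + 1 - i,
      IntegrableOn (fun x => F (i + r) x * (iteratedDeriv r w x * iteratedDeriv i ϑ x)) U) :
    ∫ x in U, leibnizTransfer k w F i x * iteratedDeriv i ϑ x =
      ∑ r ∈ Finset.range (k + 1 - i), (-1) ^ r * ((i + r).choose i : ℝ) *
        ∫ x in U, F (i + r) x * (iteratedDeriv r w x * iteratedDeriv i ϑ x) := by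
  have hpt : (fun x => leibnizTransfer k w F i x * iteratedDeriv i ϑ x) = fun x =>
      ∑ r ∈ Finset.range (k + 1 - i), (-1) ^ r * ((i + r).choose i : ℝ) *
        (F (i + r) x * (iteratedDeriv r w x * iteratedDeriv i ϑ x)) := by
    funext x
    simp only [leibnizTransfer, Finset.sum_mul]
    exact Finset.sum_congr rfl fun r _ => by ring
  rw [hpt, integral_finsetSum _ fun r hr => (hint r (Finset.mem_range.1 hr)).const_mul _]
  exact Finset.sum_congr rfl fun r _ => integral_const_mul _ _

theorem integral_mul_iteratedDeriv_mul {j : ℕ} {U : Set ℝ} {f w ϑ : ℝ → ℝ} (hU : IsOpen U)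
    (hw : ContDiffOn ℝ j w U) (hϑ : ContDiff ℝ j ϑ)
    (hint : ∀ i ≤ j,
      IntegrableOn (fun x => f x * (iteratedDeriv (j - i) w x * iteratedDeriv i ϑ x)) U) :
    ∫ x in U, f x * iteratedDeriv j (fun x => w x * ϑ x) x =
      ∑ i ∈ Finset.range (j + 1), (j.choose i : ℝ) *
        ∫ x in U, f x * (iteratedDeriv (j - i) w x * iteratedDeriv i ϑ x) := by
  have hpt : EqOn (fun x => f x * iteratedDeriv j (fun x => w x * ϑ x) x) (fun x =>
      ∑ i ∈ Finset.range (j + 1), (j.choose i : ℝ) *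
        (f x * (iteratedDeriv (j - i) w x * iteratedDeriv i ϑ x))) U := by
    intro x hx
    have hcomm : (fun x => w x * ϑ x) = fun x => ϑ x * w x := funext fun x => mul_comm _ _
    dsimp only
    rw [hcomm, iteratedDeriv_fun_mul hϑ.contDiffAt (hw.contDiffAt (hU.mem_nhds hx)),
      Finset.mul_sum]
    exact Finset.sum_congr rfl fun i _ => by ring
  rw [setIntegral_congr_fun hU.measurableSet hpt, integral_finsetSum _ fun i hi =>
    (hint i (Nat.lt_succ_iff.1 (Finset.mem_range.1 hi))).const_mul _]
  exact Finset.sum_congr rfl fun i _ => integral_const_mul _ _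

theorem negPair_leibnizTransfer {k : ℕ} {w ϑ : ℝ → ℝ} {F : ℕ → ℝ → ℝ}
    (hw : ContDiffOn ℝ k w (Ioi 0)) (hF : ∀ j ≤ k, LocallyIntegrableOn (F j) (Ioi 0))
    (hϑ : ContDiff ℝ k ϑ) (hϑc : HasCompactSupport ϑ) (hϑs : tsupport ϑ ⊆ Ioi 0) :
    negPair k (leibnizTransfer k w F) ϑ = negPair k F (fun x => w x * ϑ x) := by
  set I : ℕ → ℕ → ℕ → ℝ := fun r i j =>
    ∫ x in Ioi 0, F j x * (iteratedDeriv r w x * iteratedDeriv i ϑ x)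
  have hint : ∀ r ≤ k, ∀ i ≤ k, ∀ j ≤ k, IntegrableOn
      (fun x => F j x * (iteratedDeriv r w x * iteratedDeriv i ϑ x)) (Ioi 0) :=
    fun r hr i hi j hj =>
      integrableOn_mul_iteratedDeriv_mul isOpen_Ioi (hF j hj) hw hϑ hϑc hϑs hr hi
  calc negPair k (leibnizTransfer k w F) ϑ
      = ∑ i ∈ Finset.range (k + 1), ∑ r ∈ Finset.range (k + 1 - i),
          (-1) ^ (i + r) * ((i + r).choose i : ℝ) * I (i + r - i) i (i + r) := by
        refine Finset.sum_congr rfl fun i hi => ?_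
        rw [integral_leibnizTransfer_mul fun r hr => hint r (by omega) i (by grind) _ (by omega),
          Finset.mul_sum]
        refine Finset.sum_congr rfl fun r _ => ?_
        rw [Nat.add_sub_cancel_left, pow_add]
        ring
    _ = ∑ j ∈ Finset.range (k + 1), ∑ i ∈ Finset.range (j + 1),
          (-1) ^ j * (j.choose i : ℝ) * I (j - i) i j :=
        (sum_range_sum_range_succ_comm k fun i j =>
          (-1) ^ j * (j.choose i : ℝ) * I (j - i) i j).symm
    _ = negPair k F (fun x => w x * ϑ x) := by
        refine Finset.sum_congr rfl fun j hj => ?_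
        have hj : j ≤ k := Nat.lt_succ_iff.1 (Finset.mem_range.1 hj)
        rw [integral_mul_iteratedDeriv_mul isOpen_Ioi (hw.of_le (by exact_mod_cast hj))
          (hϑ.of_le (by exact_mod_cast hj)) fun i hi => hint _ (by omega) i (by omega) j hj,
          Finset.mul_sum]
        refine Finset.sum_congr rfl fun i _ => ?_
        ring

theorem abs_leibnizTransfer_mul_le {k i : ℕ} (hi : i ≤ k) {w a b : ℝ → ℝ} {F : ℕ → ℝ → ℝ}
    {C x : ℝ} (hC : 0 ≤ C) (hwb : ∀ r ≤ k, |iteratedDeriv r w x * b x| ≤ C * |a x|) :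
    |leibnizTransfer k w F i x * b x| ≤
      2 ^ k * C * ∑ j ∈ Finset.range (k + 1), |F j x * a x| := by
  have hterm : ∀ r ∈ Finset.range (k + 1 - i),
      |(-1) ^ r * ((i + r).choose i : ℝ) * (F (i + r) x * iteratedDeriv r w x) * b x| ≤
        2 ^ k * C * |F (i + r) x * a x| := by
    intro r hr
    have hr : i + r ≤ k := by grind
    have hchoose : ((i + r).choose i : ℝ) ≤ 2 ^ k := by
      exact_mod_cast (Nat.choose_le_two_pow _ _).trans (Nat.pow_le_pow_right two_pos hr)
    calc |(-1) ^ r * ((i + r).choose i : ℝ) * (F (i + r) x * iteratedDeriv r w x) * b x|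
        = ((i + r).choose i : ℝ) * (|F (i + r) x| * |iteratedDeriv r w x * b x|) := by
          simp only [abs_mul, abs_pow, abs_neg, abs_one, one_pow, one_mul, Nat.abs_cast]; ring
      _ ≤ 2 ^ k * (|F (i + r) x| * (C * |a x|)) := by gcongr; exact hwb r (by omega)
      _ = 2 ^ k * C * |F (i + r) x * a x| := by rw [abs_mul]; ring
  calc |leibnizTransfer k w F i x * b x|
      ≤ ∑ r ∈ Finset.range (k + 1 - i),
          |(-1) ^ r * ((i + r).choose i : ℝ) * (F (i + r) x * iteratedDeriv r w x) * b x| := by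
        rw [leibnizTransfer, Finset.sum_mul]; exact Finset.abs_sum_le_sum_abs _ _
    _ ≤ ∑ r ∈ Finset.range (k + 1 - i), 2 ^ k * C * |F (i + r) x * a x| := Finset.sum_le_sum hterm
    _ = 2 ^ k * C * ∑ j ∈ Finset.Ico i (k + 1), |F j x * a x| := by
        rw [Finset.sum_Ico_eq_sum_range, Finset.mul_sum]
    _ ≤ 2 ^ k * C * ∑ j ∈ Finset.range (k + 1), |F j x * a x| := by
        refine mul_le_mul_of_nonneg_left (Finset.sum_le_sum_of_subset_of_nonneg
          (fun j hj => Finset.mem_range.2 (Finset.mem_Ico.1 hj).2) fun j _ _ => abs_nonneg _) ?_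
        positivity

theorem exists_leibnizTransfer_memLp_norm_le (k : ℕ) {w a b : ℝ → ℝ}
    (hw : ContDiffOn ℝ k w (Ioi 0)) (ha : ContinuousOn a (Ioi 0)) (ha0 : ∀ x ∈ Ioi 0, a x ≠ 0)
    (hb : ContinuousOn b (Ioi 0))
    (hwb : ∀ r ≤ k, (fun x => iteratedDeriv r w x * b x) =O[𝓟 (Ioi 0)] a) :
    ∃ c, 0 < c ∧ ∀ F : ℕ → ℝ → ℝ,
      (∀ j ≤ k, MemLp (fun x => F j x * a x) 2 (volume.restrict (Ioi 0))) →
      (∀ i ≤ k, MemLp (fun x => leibnizTransfer k w F i x * b x) 2 (volume.restrict (Ioi 0))) ∧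
      √(∑ i ∈ Finset.range (k + 1), ∫ x in Ioi 0, (leibnizTransfer k w F i x * b x) ^ 2) ≤
        c * √(∑ j ∈ Finset.range (k + 1), ∫ x in Ioi 0, (F j x * a x) ^ 2) := by
  obtain ⟨C, hC, hCwb⟩ := exists_pos_forall_abs_le_of_isBigO (s := Finset.range (k + 1))
    fun r hr => hwb r (Nat.lt_succ_iff.1 (Finset.mem_range.1 hr))
  refine ⟨(k + 1) * (2 ^ k * C), by positivity, fun F hF => ?_⟩
  have hbound : ∀ i ≤ k, ∀ᵐ x ∂(volume.restrict (Ioi 0)), |leibnizTransfer k w F i x * b x| ≤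
      2 ^ k * C * ∑ j ∈ Finset.range (k + 1), |F j x * a x| := fun i hi =>
    (ae_restrict_mem measurableSet_Ioi).mono fun x hx =>
      abs_leibnizTransfer_mul_le hi hC.le fun r hr => hCwb r (by grind) x hx
  refine ⟨fun i hi => ?_, sqrt_sum_integral_sq_le_of_abs_le (by positivity) hF hbound⟩
  have hFm : ∀ j ≤ k, AEStronglyMeasurable (F j) (volume.restrict (Ioi 0)) := fun j hj =>
    (locallyIntegrableOn_of_memLp_mul one_le_two isOpen_Ioi ha ha0 (hF j hj)).aestronglyMeasurable
  have hGm : AEStronglyMeasurable (fun x => leibnizTransfer k w F i x * b x)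
      (volume.restrict (Ioi 0)) :=
    (Finset.aestronglyMeasurable_fun_sum _ fun r hr => ((hFm (i + r) (by grind)).mul
      ((hw.continuousOn_iteratedDeriv_of_isOpen isOpen_Ioi (by grind)).aestronglyMeasurable
        measurableSet_Ioi)).const_mul _).mul (hb.aestronglyMeasurable measurableSet_Ioi)
  have hS : MemLp (fun x => ∑ j ∈ Finset.range (k + 1), |F j x * a x|) 2
      (volume.restrict (Ioi 0)) :=
    memLp_finsetSum _ fun j hj => (hF j (Nat.lt_succ_iff.1 (Finset.mem_range.1 hj))).norm
  refine MemLp.of_le_mul (c := 2 ^ k * C) hS hGm ?_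
  filter_upwards [hbound i hi] with x hx
  rwa [Real.norm_eq_abs, Real.norm_of_nonneg (Finset.sum_nonneg fun j _ => abs_nonneg _)]

namespace IsAdmissibleWeight

variable {ψ : ℝ → ℝ}

theorem pos (hψ : IsAdmissibleWeight ψ) {x : ℝ} (hx : 0 ≤ x) : 0 < ψ x :=
  hψ.2.1 x hx

theorem isBigO_iteratedDeriv_rpow (hψ : IsAdmissibleWeight ψ) (n : ℕ) (p : ℝ) :
    iteratedDeriv n (fun x => ψ x ^ p) =O[𝓟 (Ioi 0)] fun x => ψ x ^ p := by
  obtain ⟨hsmooth, hpos, hderiv, -⟩ := hψ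
  refine _root_.isBigO_iteratedDeriv_rpow isOpen_Ioi (hsmooth.mono Ioi_subset_Ici_self)
    (fun x hx => hpos x hx.le) (fun j => ?_) n p
  obtain ⟨c, hc⟩ := hderiv j
  refine isBigO_principal.2 ⟨c, fun x (hx : 0 < x) => ?_⟩
  rw [Real.norm_eq_abs, Real.norm_of_nonneg (hpos x hx.le).le,
    ← iteratedDerivWithin_eq_iteratedDeriv (uniqueDiffOn_Ici 0)
      ((hsmooth.contDiffAt (Ici_mem_nhds hx)).of_le (by exact_mod_cast le_top)) hx.le]
  exact hc x hx.le

theorem contDiffOn_rpow (hψ : IsAdmissibleWeight ψ) (n : ℕ) (p : ℝ) :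
    ContDiffOn ℝ n (fun x => ψ x ^ p) (Ioi 0) :=
  ((hψ.1.mono Ioi_subset_Ici_self).of_le (by exact_mod_cast le_top)).rpow_const_of_ne
    fun x hx => (hψ.pos hx.le).ne'

theorem integral_mul_sqrt_sq (hψ : IsAdmissibleWeight ψ) (f : ℝ → ℝ) :
    ∫ x in Ioi 0, (f x * √(ψ x)) ^ 2 = ∫ x in Ioi 0, f x ^ 2 * ψ x :=
  setIntegral_congr_fun measurableSet_Ioi fun x hx => by
    rw [mul_pow, Real.sq_sqrt (hψ.pos hx.le).le]

theorem exists_unweighted_of_weighted (hψ : IsAdmissibleWeight ψ) (k : ℕ) :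
    ∃ c, 0 < c ∧ ∀ F : ℕ → ℝ → ℝ,
      (∀ j ≤ k, MemLp (fun x => F j x * √(ψ x)) 2 (volume.restrict (Ioi 0))) →
      ∃ G : ℕ → ℝ → ℝ, (∀ j ≤ k, MemLp (G j) 2 (volume.restrict (Ioi 0))) ∧
        (∀ ϑ : ℝ → ℝ, ContDiff ℝ (⊤ : ℕ∞) ϑ → HasCompactSupport ϑ → tsupport ϑ ⊆ Ioi 0 →
          negPair k G ϑ = negPair k F (fun x => √(ψ x) * ϑ x)) ∧
        √(∑ j ∈ Finset.range (k + 1), ∫ x in Ioi 0, G j x ^ 2) ≤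
          c * √(∑ j ∈ Finset.range (k + 1), ∫ x in Ioi 0, F j x ^ 2 * ψ x) := by
  have hsqrt : (fun x => √(ψ x)) = fun x => ψ x ^ (1 / 2 : ℝ) :=
    funext fun x => Real.sqrt_eq_rpow (ψ x)
  have hw : ContDiffOn ℝ k (fun x => √(ψ x)) (Ioi 0) := hsqrt ▸ hψ.contDiffOn_rpow k _
  have hpos : ∀ x ∈ Ioi (0 : ℝ), √(ψ x) ≠ 0 := fun x hx =>
    (Real.sqrt_pos.2 (hψ.pos hx.le)).ne'
  obtain ⟨c, hc, hT⟩ := exists_leibnizTransfer_memLp_norm_le k (b := fun _ => 1) hw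
    hw.continuousOn hpos continuousOn_const fun r _ => by
      simpa only [mul_one, hsqrt] using hψ.isBigO_iteratedDeriv_rpow r (1 / 2)
  refine ⟨c, hc, fun F hF => ?_⟩
  obtain ⟨hGmem, hGnorm⟩ := hT F hF
  refine ⟨leibnizTransfer k (fun x => √(ψ x)) F, by simpa only [mul_one] using hGmem,
    fun ϑ hϑ hϑc hϑs => negPair_leibnizTransfer hw (fun j hj =>
      locallyIntegrableOn_of_memLp_mul one_le_two isOpen_Ioi hw.continuousOn hpos (hF j hj))
      (hϑ.of_le (by exact_mod_cast le_top)) hϑc hϑs, ?_⟩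
  simpa only [mul_one, hψ.integral_mul_sqrt_sq] using hGnorm

theorem rpow_neg_half_mul_sqrt (hψ : IsAdmissibleWeight ψ) {x : ℝ} (hx : 0 < x) :
    ψ x ^ (-(1 / 2) : ℝ) * √(ψ x) = 1 := by
  rw [Real.sqrt_eq_rpow, ← Real.rpow_add (hψ.pos hx.le), neg_add_cancel, Real.rpow_zero]

theorem exists_weighted_of_unweighted (hψ : IsAdmissibleWeight ψ) (k : ℕ) :
    ∃ c, 0 < c ∧ ∀ G : ℕ → ℝ → ℝ, (∀ j ≤ k, MemLp (G j) 2 (volume.restrict (Ioi 0))) →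
      ∃ F : ℕ → ℝ → ℝ,
        (∀ j ≤ k, MemLp (fun x => F j x * √(ψ x)) 2 (volume.restrict (Ioi 0))) ∧
        (∀ ϑ : ℝ → ℝ, ContDiff ℝ (⊤ : ℕ∞) ϑ → HasCompactSupport ϑ → tsupport ϑ ⊆ Ioi 0 →
          negPair k G ϑ = negPair k F (fun x => √(ψ x) * ϑ x)) ∧
        √(∑ j ∈ Finset.range (k + 1), ∫ x in Ioi 0, F j x ^ 2 * ψ x) ≤
          c * √(∑ j ∈ Finset.range (k + 1), ∫ x in Ioi 0, G j x ^ 2) := by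
  set w : ℝ → ℝ := fun x => ψ x ^ (-(1 / 2) : ℝ)
  have hsqrt : (fun x => √(ψ x)) = fun x => ψ x ^ (1 / 2 : ℝ) :=
    funext fun x => Real.sqrt_eq_rpow (ψ x)
  have hs : ContDiffOn ℝ k (fun x => √(ψ x)) (Ioi 0) := hsqrt ▸ hψ.contDiffOn_rpow k _
  have hwb : ∀ r ≤ k, (fun x => iteratedDeriv r w x * √(ψ x)) =O[𝓟 (Ioi 0)] fun _ => (1 : ℝ) :=
    fun r _ => ((hψ.isBigO_iteratedDeriv_rpow r _).mul (isBigO_refl (fun x => √(ψ x)) _)).congr'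
      EventuallyEq.rfl (eventuallyEq_principal.2 fun x hx => hψ.rpow_neg_half_mul_sqrt hx)
  obtain ⟨c, hc, hT⟩ := exists_leibnizTransfer_memLp_norm_le k (a := fun _ => 1)
    (hψ.contDiffOn_rpow k _) continuousOn_const (fun _ _ => one_ne_zero) hs.continuousOn hwb
  refine ⟨c, hc, fun G hG => ?_⟩
  obtain ⟨hFmem, hFnorm⟩ := hT G (by simpa only [mul_one] using hG)
  refine ⟨leibnizTransfer k w G, hFmem, fun ϑ hϑ hϑc hϑs => ?_,
    by simpa only [mul_one, hψ.integral_mul_sqrt_sq] using hFnorm⟩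
  rw [negPair_leibnizTransfer (hψ.contDiffOn_rpow k _) (fun j hj =>
      locallyIntegrableOn_of_locallyIntegrable_restrict ((hG j hj).locallyIntegrable one_le_two))
    (hs.contDiff_mul_of_tsupport_subset isOpen_Ioi (hϑ.of_le (by exact_mod_cast le_top)) hϑs)
    hϑc.mul_left (tsupport_mul_subset_right.trans hϑs)]
  exact negPair_congr k G fun x hx => by
    rw [← mul_assoc, hψ.rpow_neg_half_mul_sqrt hx, one_mul]

end IsAdmissibleWeight

/-- The infimum norms of `H^{-k,ψ(x)}(ℝ₊)` and `H^{-k}(ℝ₊)` are compared through representations. -/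
theorem statement10 (ψ : ℝ → ℝ) (hψ : IsAdmissibleWeight ψ) (k : ℕ) :
    ∃ c : ℝ, 0 < c ∧
    (∀ F : ℕ → ℝ → ℝ,
      (∀ j : ℕ, j ≤ k → MemLp (fun x => F j x * Real.sqrt (ψ x)) 2 (volume.restrict (Ioi 0))) →
      ∃ G : ℕ → ℝ → ℝ,
        (∀ j : ℕ, j ≤ k → MemLp (G j) 2 (volume.restrict (Ioi 0))) ∧
        (∀ ϑ : ℝ → ℝ, ContDiff ℝ (⊤ : ℕ∞) ϑ → HasCompactSupport ϑ → tsupport ϑ ⊆ Ioi 0 →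
          negPair k G ϑ = negPair k F (fun x => Real.sqrt (ψ x) * ϑ x)) ∧
        Real.sqrt (∑ j ∈ Finset.range (k + 1), ∫ x in Ioi (0 : ℝ), (G j x) ^ 2) ≤
          c * Real.sqrt (∑ j ∈ Finset.range (k + 1), ∫ x in Ioi (0 : ℝ), (F j x) ^ 2 * ψ x)) ∧
    (∀ G : ℕ → ℝ → ℝ,
      (∀ j : ℕ, j ≤ k → MemLp (G j) 2 (volume.restrict (Ioi 0))) →
      ∃ F : ℕ → ℝ → ℝ,
        (∀ j : ℕ, j ≤ k → MemLp (fun x => F j x * Real.sqrt (ψ x)) 2 (volume.restrict (Ioi 0))) ∧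
        (∀ ϑ : ℝ → ℝ, ContDiff ℝ (⊤ : ℕ∞) ϑ → HasCompactSupport ϑ → tsupport ϑ ⊆ Ioi 0 →
          negPair k G ϑ = negPair k F (fun x => Real.sqrt (ψ x) * ϑ x)) ∧
        Real.sqrt (∑ j ∈ Finset.range (k + 1), ∫ x in Ioi (0 : ℝ), (F j x) ^ 2 * ψ x) ≤
          c * Real.sqrt (∑ j ∈ Finset.range (k + 1), ∫ x in Ioi (0 : ℝ), (G j x) ^ 2)) := by
  obtain ⟨c₁, hc₁, hforward⟩ := hψ.exists_unweighted_of_weighted k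
  obtain ⟨c₂, hc₂, hbackward⟩ := hψ.exists_weighted_of_unweighted k
  refine ⟨max c₁ c₂, lt_max_of_lt_left hc₁, fun F hF => ?_, fun G hG => ?_⟩
  · obtain ⟨G, hG, hpair, hnorm⟩ := hforward F hF
    exact ⟨G, hG, hpair, hnorm.trans (by gcongr; exact le_max_left _ _)⟩
  · obtain ⟨F, hF, hpair, hnorm⟩ := hbackward G hG
    exact ⟨F, hF, hpair, hnorm.trans (by gcongr; exact le_max_right _ _)⟩

end
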